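/- For every positive integer n and real x, F_n(x) = ∑_{j=0}^{n} (1−2x)^{2j} · 4^{−j} · C(n,j) · ∑_{i=0}^{n−j} (−1/4)^i C(n−j,i) C(2i+2j, i+j). -/

import Mathlib

open Finset


lemma cast_pred_mul (D : ℕ) : (((D - 1 : ℕ) : ℝ)) * (D : ℝ) = ((D : ℝ) - 1) * D := by
  cases D with
  | zero => simp
  | succ d => push_cast [Nat.succ_sub_one]; ring

lemma core_inrange (K D : ℕ) :
    ((K + D + 2 : ℕ) : ℝ) * (((K + D + 2).choose (K + 2) : ℝ))^2
      + ((K + D + 1 : ℕ) : ℝ) * (((K + D).choose K : ℝ))^2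
      + ((K + D + 1 : ℕ) : ℝ) * (((K + D).choose (K + 2) : ℝ))^2
    = (2 * (K + D : ℕ) + 3 : ℝ) * ((((K + D + 1).choose (K + 1) : ℝ))^2
        + (((K + D + 1).choose (K + 2) : ℝ))^2)
      + 2 * ((K + D + 1 : ℕ) : ℝ) * (((K + D).choose (K + 1) : ℝ))^2 := by
  set m := K + D with hm
  have e2n : (m + 1).choose (K + 1) * (K + 1) = (m + 1) * m.choose K := by
    simpa [Nat.succ_eq_add_one, mul_comm] using (Nat.add_one_mul_choose_eq m K).symm
  have e3n : m.choose (K + 1) * (K + 1) = m.choose K * D := by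
    rw [Nat.choose_succ_right_eq]; congr 1; omega
  have e4n : (m + 1).choose (K + 2) * (K + 2) = (m + 1).choose (K + 1) * D := by
    rw [Nat.choose_succ_right_eq]; congr 1; omega
  have e5n : m.choose (K + 2) * (K + 2) = m.choose (K + 1) * (D - 1) := by
    rw [Nat.choose_succ_right_eq]; congr 1; omega
  have e1n : (m + 2).choose (K + 2) * ((K + 1) * (K + 2)) = (m + 1) * (m + 2) * m.choose K := by
    have h1 : (m + 2).choose (K + 2) * (K + 2) = (m + 2) * (m + 1).choose (K + 1) := by
      simpa [Nat.succ_eq_add_one] using (Nat.add_one_mul_choose_eq (m+1) (K+1)).symm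
    calc (m + 2).choose (K + 2) * ((K + 1) * (K + 2))
        = (m + 2).choose (K + 2) * (K + 2) * (K + 1) := by ring
      _ = (m + 2) * ((m + 1).choose (K + 1) * (K + 1)) := by rw [h1]; ring
      _ = (m + 2) * ((m + 1) * m.choose K) := by rw [e2n]
      _ = (m + 1) * (m + 2) * m.choose K := by ring
  have hq1 : ((K : ℝ) + 1) ≠ 0 := by positivity
  have hq2 : ((K : ℝ) + 2) ≠ 0 := by positivity
  have hq12 : ((K : ℝ) + 1) * ((K : ℝ) + 2) ≠ 0 := mul_ne_zero hq1 hq2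
  set c := (m.choose K : ℝ) with hc
  have v1 : ((m + 2).choose (K + 2) : ℝ)
      = ((m:ℝ) + 1) * ((m:ℝ) + 2) * c / (((K:ℝ) + 1) * ((K:ℝ) + 2)) := by
    rw [eq_div_iff hq12]
    have := congrArg (Nat.cast (R := ℝ)) e1n
    push_cast at this; linarith
  have v2 : ((m + 1).choose (K + 1) : ℝ) = ((m:ℝ) + 1) * c / ((K:ℝ) + 1) := by
    rw [eq_div_iff hq1]
    have := congrArg (Nat.cast (R := ℝ)) e2n
    push_cast at this; linarith
  have v3 : ((m).choose (K + 1) : ℝ) = (D:ℝ) * c / ((K:ℝ) + 1) := by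
    rw [eq_div_iff hq1]
    have := congrArg (Nat.cast (R := ℝ)) e3n
    push_cast at this; linarith
  have v4 : ((m + 1).choose (K + 2) : ℝ) = (D:ℝ) * ((m + 1).choose (K + 1) : ℝ) / ((K:ℝ) + 2) := by
    rw [eq_div_iff hq2]
    have := congrArg (Nat.cast (R := ℝ)) e4n
    push_cast at this; linarith
  have v5 : ((m).choose (K + 2) : ℝ) = ((D:ℝ) - 1) * ((m).choose (K + 1) : ℝ) / ((K:ℝ) + 2) := by
    rw [eq_div_iff hq2]
    have := congrArg (Nat.cast (R := ℝ)) e5n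
    push_cast [-Nat.cast_sub] at this
    have h2 := cast_pred_mul D
    rw [v3]
    rw [v3] at this
    field_simp at this ⊢
    nlinarith [this, h2]
  rw [v1, v4, v5, v3, v2]
  have hmr : (m : ℝ) = (K : ℝ) + (D : ℝ) := by push_cast [hm]; ring
  push_cast
  rw [hmr]
  field_simp
  ring



def gg1 (m : ℕ) (A B : ℝ) : ℕ → ℝ
  | 0 => 0
  | (k+1) => (((m+1).choose k : ℝ))^2 * A^(k+1) * B^(m+1-k)

def gg2 (m : ℕ) (A B : ℝ) : ℕ → ℝ
  | 0 => 0
  | 1 => 0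
  | (k+2) => ((m.choose k : ℝ))^2 * A^(k+2) * B^(m-k)

def gg3 (m : ℕ) (A B : ℝ) : ℕ → ℝ
  | 0 => 0
  | (k+1) => ((m.choose k : ℝ))^2 * A^(k+1) * B^(m+1-k)

lemma perk (m k : ℕ) (A B : ℝ) :
    ((m:ℝ)+2) * ((m+2).choose k : ℝ)^2 * A^k * B^(m+2-k)
      + ((m:ℝ)+1) * gg2 m A B k
      + ((m:ℝ)+1) * ((m.choose k : ℝ)^2 * A^k * B^(m+2-k))
    = (2*(m:ℝ)+3) * gg1 m A B k
      + (2*(m:ℝ)+3) * (((m+1).choose k : ℝ)^2 * A^k * B^(m+2-k))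
      + 2*((m:ℝ)+1) * gg3 m A B k := by
  match k with
  | 0 => simp [gg1, gg2, gg3]; ring
  | 1 =>
    have h1 : m + 2 - 1 = m + 1 := by omega
    simp only [gg1, gg2, gg3, h1, Nat.choose_one_right, Nat.choose_zero_right, Nat.sub_zero]
    push_cast
    ring
  | (k'+2) =>
    have h1 : m + 2 - (k' + 2) = m - k' := by omega
    have h2 : m + 1 - (k' + 1) = m - k' := by omega
    simp only [gg1, gg2, gg3, h1, h2]
    rcases le_or_gt k' m with h | h
    · obtain ⟨D, rfl⟩ : ∃ D, m = k' + D := ⟨m - k', by omega⟩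
      have := core_inrange k' D
      push_cast at this ⊢
      linear_combination (A^(k'+2) * B^(k'+D-k')) * this
    · have c1 : (m+2).choose (k'+2) = 0 := Nat.choose_eq_zero_of_lt (by omega)
      have c2 : m.choose k' = 0 := Nat.choose_eq_zero_of_lt (by omega)
      have c3 : m.choose (k'+2) = 0 := Nat.choose_eq_zero_of_lt (by omega)
      have c4 : (m+1).choose (k'+1) = 0 := Nat.choose_eq_zero_of_lt (by omega)
      have c5 : (m+1).choose (k'+2) = 0 := Nat.choose_eq_zero_of_lt (by omega)
      have c6 : m.choose (k'+1) = 0 := Nat.choose_eq_zero_of_lt (by omega)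
      simp [c1, c2, c3, c4, c5, c6]

lemma Lrec (A B : ℝ) (m : ℕ) :
    ((m:ℝ)+2) * (∑ k ∈ range (m+2+1), ((m+2).choose k : ℝ)^2 * A^k * B^(m+2-k))
    = (2*(m:ℝ)+3) * ((A+B) * (∑ k ∈ range (m+1+1), ((m+1).choose k : ℝ)^2 * A^k * B^(m+1-k)))
      - ((m:ℝ)+1) * ((A-B)^2 * (∑ k ∈ range (m+1), (m.choose k : ℝ)^2 * A^k * B^(m-k))) := by
  have h1 : (∑ k ∈ range (m+3), ((m:ℝ)+2) * ((m+2).choose k : ℝ)^2 * A^k * B^(m+2-k))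
      = ((m:ℝ)+2) * (∑ k ∈ range (m+2+1), ((m+2).choose k : ℝ)^2 * A^k * B^(m+2-k)) := by
    rw [mul_sum]; exact sum_congr rfl fun k _ => by ring
  have h3 : (∑ k ∈ range (m+3), ((m:ℝ)+1) * gg2 m A B k)
      = ((m:ℝ)+1) * (A*A* (∑ k ∈ range (m+1), (m.choose k : ℝ)^2 * A^k * B^(m-k))) := by
    rw [sum_range_succ', sum_range_succ']
    simp only [gg2, mul_zero, add_zero]
    rw [mul_sum, mul_sum]
    exact sum_congr rfl fun k _ => by ring
  have h4 : (∑ k ∈ range (m+3), ((m:ℝ)+1) * ((m.choose k : ℝ)^2 * A^k * B^(m+2-k)))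
      = ((m:ℝ)+1) * (B*B* (∑ k ∈ range (m+1), (m.choose k : ℝ)^2 * A^k * B^(m-k))) := by
    rw [sum_range_succ, sum_range_succ]
    simp only [Nat.choose_eq_zero_of_lt (by omega : m < m+2),
      Nat.choose_eq_zero_of_lt (by omega : m < m+1)]
    push_cast
    simp only [ne_eq, zero_pow, mul_zero, zero_mul, add_zero, OfNat.ofNat_ne_zero,
      not_false_eq_true, zero_pow]
    rw [mul_sum, mul_sum]
    refine sum_congr rfl fun k hk => ?_
    rw [mem_range] at hk
    have he : m + 2 - k = (m - k) + 2 := by omega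
    rw [he]
    ring
  have h5 : (∑ k ∈ range (m+3), (2*(m:ℝ)+3) * gg1 m A B k)
      = (2*(m:ℝ)+3) * (A * (∑ k ∈ range (m+1+1), ((m+1).choose k : ℝ)^2 * A^k * B^(m+1-k))) := by
    rw [sum_range_succ']
    simp only [gg1, mul_zero, add_zero]
    rw [mul_sum, mul_sum]
    exact sum_congr rfl fun k _ => by ring
  have h6 : (∑ k ∈ range (m+3), (2*(m:ℝ)+3) * (((m+1).choose k : ℝ)^2 * A^k * B^(m+2-k)))
      = (2*(m:ℝ)+3) * (B * (∑ k ∈ range (m+1+1), ((m+1).choose k : ℝ)^2 * A^k * B^(m+1-k))) := by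
    rw [sum_range_succ]
    simp only [Nat.choose_eq_zero_of_lt (by omega : m+1 < m+2)]
    push_cast
    simp only [ne_eq, zero_pow, mul_zero, zero_mul, add_zero, OfNat.ofNat_ne_zero,
      not_false_eq_true, zero_pow]
    rw [mul_sum, mul_sum]
    refine sum_congr rfl fun k hk => ?_
    rw [mem_range] at hk
    have he : m + 2 - k = (m + 1 - k) + 1 := by omega
    rw [he]
    ring
  have h7 : (∑ k ∈ range (m+3), 2*((m:ℝ)+1) * gg3 m A B k)
      = 2*((m:ℝ)+1) * ((A*B) * (∑ k ∈ range (m+1), (m.choose k : ℝ)^2 * A^k * B^(m-k))) := by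
    rw [sum_range_succ']
    simp only [gg3, mul_zero, add_zero]
    rw [sum_range_succ]
    simp only [Nat.choose_eq_zero_of_lt (by omega : m < m+1)]
    push_cast
    simp only [ne_eq, zero_pow, mul_zero, zero_mul, add_zero, OfNat.ofNat_ne_zero,
      not_false_eq_true, zero_pow]
    rw [mul_sum, mul_sum]
    refine sum_congr rfl fun k hk => ?_
    rw [mem_range] at hk
    have he : m + 1 - k = (m - k) + 1 := by omega
    rw [he]
    ring
  have main : (∑ k ∈ range (m+3),
      (((m:ℝ)+2) * ((m+2).choose k : ℝ)^2 * A^k * B^(m+2-k)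
      + ((m:ℝ)+1) * gg2 m A B k
      + ((m:ℝ)+1) * ((m.choose k : ℝ)^2 * A^k * B^(m+2-k))))
      = (∑ k ∈ range (m+3),
      ((2*(m:ℝ)+3) * gg1 m A B k
      + (2*(m:ℝ)+3) * (((m+1).choose k : ℝ)^2 * A^k * B^(m+2-k))
      + 2*((m:ℝ)+1) * gg3 m A B k)) :=
    sum_congr rfl fun k _ => perk m k A B
  rw [sum_add_distrib, sum_add_distrib, sum_add_distrib, sum_add_distrib] at main
  rw [h1, h3, h4, h5, h6, h7] at main
  nlinarith [main]



noncomputable def cb (p : ℕ) : ℝ := ((2*p).choose p : ℝ) / 4^p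

lemma cb_rec (p : ℕ) : 2*((p:ℝ)+1) * cb (p+1) = (2*(p:ℝ)+1) * cb p := by
  have h := Nat.succ_mul_centralBinom_succ p
  unfold Nat.centralBinom at h
  have h' := congrArg (Nat.cast (R := ℝ)) h
  push_cast at h'
  unfold cb
  have h4 : (4:ℝ)^(p+1) = 4 * 4^p := by ring
  rw [h4]
  field_simp
  have e1 : (2*(p+1)).choose (p+1) = (2*p+1+1).choose (p+1) := by
    have : 2*(p+1) = 2*p+1+1 := by omega
    rw [this]
  rw [e1]; rw [e1] at h'
  linear_combination 2 * h'

lemma P2b (v : ℝ) (t : ℕ) :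
    2*((t:ℝ)+1) * (∑ j ∈ range (t+1), cb j * cb (t-j) * v^j)
      - (∑ i ∈ range (t+1), (2*(i:ℝ)+1) * cb i * cb (t-i) * v^i)
    = ∑ j ∈ range (t+1), (((2*(t-j)+1 : ℕ)):ℝ) * cb j * cb (t-j) * v^j := by
  rw [mul_sum, ← sum_sub_distrib]
  refine sum_congr rfl fun j hj => ?_
  rw [mem_range] at hj
  have : ((2*(t-j)+1 : ℕ) : ℝ) = 2*((t:ℝ) - j) + 1 := by
    push_cast [Nat.cast_sub (by omega : j ≤ t)]; ring
  rw [this]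
  ring

lemma P2a (v : ℝ) (t : ℕ) :
    (2*(t:ℝ)+3) * (∑ j ∈ range (t+1+1), cb j * cb (t+1-j) * v^j)
      - (∑ i ∈ range (t+1+1), (2*(i:ℝ)+1) * cb i * cb (t+1-i) * v^i)
    = ∑ j ∈ range (t+1), (((2*(t-j)+1 : ℕ)):ℝ) * cb j * cb (t-j) * v^j := by
  rw [mul_sum, ← sum_sub_distrib, sum_range_succ]
  have htop : (2*(t:ℝ)+3) * (cb (t+1) * cb (t+1-(t+1)) * v^(t+1))
      - (2*((t+1:ℕ):ℝ)+1) * cb (t+1) * cb (t+1-(t+1)) * v^(t+1) = 0 := by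
    push_cast; ring
  rw [htop, add_zero]
  refine sum_congr rfl fun j hj => ?_
  rw [mem_range] at hj
  have e1 : t + 1 - j = (t - j) + 1 := by omega
  rw [e1]
  have hcb := cb_rec (t - j)
  have hco : (2*(t:ℝ)+3) - (2*(j:ℝ)+1) = 2*(((t-j : ℕ):ℝ)+1) := by
    push_cast [Nat.cast_sub (by omega : j ≤ t)]; ring
  have expand : (2*(t:ℝ)+3) * (cb j * cb ((t-j)+1) * v^j) - (2*(j:ℝ)+1) * cb j * cb ((t-j)+1) * v^j
      = (2*(((t-j : ℕ):ℝ)+1) * cb ((t-j)+1)) * (cb j * v^j) := by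
    rw [← hco]; ring
  rw [expand, hcb]
  have : ((2*(t-j)+1 : ℕ) : ℝ) = 2*(((t-j:ℕ)):ℝ)+1 := by push_cast; ring
  rw [this]
  ring

lemma P1 (v : ℝ) (t : ℕ) :
    2*((t:ℝ)+1) * (∑ j ∈ range (t+1+1), cb j * cb (t+1-j) * v^j)
    = v * (∑ i ∈ range (t+1), (2*(i:ℝ)+1) * cb i * cb (t-i) * v^i)
      + ∑ j ∈ range (t+1), (((2*(t-j)+1 : ℕ)):ℝ) * cb j * cb (t-j) * v^j := by
  rw [mul_sum]
  have split : ∀ j ∈ range (t+2), 2*((t:ℝ)+1) * (cb j * cb (t+1-j) * v^j)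
      = (2*(j:ℝ)) * cb j * cb (t+1-j) * v^j
        + (2*(((t+1-j : ℕ)):ℝ)) * cb (t+1-j) * cb j * v^j := by
    intro j hj
    rw [mem_range] at hj
    have : ((t+1-j : ℕ) : ℝ) = (t:ℝ) + 1 - j := by
      push_cast [Nat.cast_sub (by omega : j ≤ t + 1)]; ring
    rw [this]; ring
  rw [sum_congr rfl split, sum_add_distrib]
  congr 1
  · -- first piece: shift index and use cb_rec
    rw [sum_range_succ']
    simp only [Nat.cast_zero, mul_zero, zero_mul, add_zero]
    rw [mul_sum]
    refine sum_congr rfl fun j hj => ?_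
    rw [mem_range] at hj
    have e1 : t + 1 - (j+1) = t - j := by omega
    rw [e1]
    have hcb := cb_rec j
    have : (2*((j+1:ℕ)):ℝ) * cb (j+1) = (2*(j:ℝ)+1) * cb j := by
      push_cast
      linear_combination hcb
    calc (2*((j+1:ℕ)):ℝ) * cb (j+1) * cb (t-j) * v^(j+1)
        = ((2*((j+1:ℕ)):ℝ) * cb (j+1)) * (cb (t-j) * v^(j+1)) := by ring
      _ = ((2*(j:ℝ)+1) * cb j) * (cb (t-j) * v^(j+1)) := by rw [this]
      _ = v * ((2*(j:ℝ)+1) * cb j * cb (t-j) * v^j) := by ring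
  · -- second piece: drop vanishing top term and use cb_rec
    rw [sum_range_succ]
    have htop : (2*(((t+1-(t+1) : ℕ)):ℝ)) * cb (t+1-(t+1)) * cb (t+1) * v^(t+1) = 0 := by
      simp
    rw [htop, add_zero]
    refine sum_congr rfl fun j hj => ?_
    rw [mem_range] at hj
    have e1 : t + 1 - j = (t - j) + 1 := by omega
    rw [e1]
    have hcb := cb_rec (t-j)
    have h2 : (2*(((t-j)+1 : ℕ)):ℝ) * cb ((t-j)+1) = (2*(((t-j):ℕ):ℝ)+1) * cb (t-j) := by
      push_cast
      linear_combination hcb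
    have h3 : ((2*(t-j)+1 : ℕ) : ℝ) = 2*(((t-j):ℕ):ℝ)+1 := by push_cast; ring
    rw [h3]
    calc (2*(((t-j)+1 : ℕ)):ℝ) * cb ((t-j)+1) * cb j * v^j
        = ((2*(((t-j)+1 : ℕ)):ℝ) * cb ((t-j)+1)) * (cb j * v^j) := by ring
      _ = ((2*(((t-j):ℕ):ℝ)+1) * cb (t-j)) * (cb j * v^j) := by rw [h2]
      _ = (2*(((t-j):ℕ):ℝ)+1) * cb j * cb (t-j) * v^j := by ring

lemma Rrec (v : ℝ) (m : ℕ) :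
    2*((m:ℝ)+2) * (∑ j ∈ range (m+2+1), cb j * cb (m+2-j) * v^j)
    = (2*(m:ℝ)+3) * (1+v) * (∑ j ∈ range (m+1+1), cb j * cb (m+1-j) * v^j)
      - 2*((m:ℝ)+1) * v * (∑ j ∈ range (m+1), cb j * cb (m-j) * v^j) := by
  have P1b := P1 v (m+1)
  have P1a := P1 v m
  have P2am := P2a v m
  have P2bm1 := P2b v (m+1)
  have P2bm := P2b v m
  push_cast at P1b P1a P2am P2bm1 P2bm ⊢
  linear_combination P1b - P1a + (1-v) * P2am - P2bm1 + v * P2bm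



noncomputable def TT (m j : ℕ) : ℝ :=
  ∑ i ∈ range (m+1), (-1/4:ℝ)^i * (m.choose i) * ((2*i+2*j).choose (i+j))

noncomputable def gP (m j : ℕ) : ℕ → ℝ
  | 0 => 0
  | (i+1) => (-1/4:ℝ)^(i+1) * (m.choose i) * ((2*(i+1)+2*j).choose (i+1+j))

lemma pascalT (m j : ℕ) : TT (m+1) j = TT m j + (-1/4) * TT m (j+1) := by
  unfold TT
  have split : ∀ i ∈ range (m+2),
      (-1/4:ℝ)^i * ((m+1).choose i) * ((2*i+2*j).choose (i+j))
      = (-1/4:ℝ)^i * (m.choose i) * ((2*i+2*j).choose (i+j)) + gP m j i := by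
    intro i hi
    match i with
    | 0 => simp [gP]
    | (i'+1) =>
      show (-1/4:ℝ)^(i'+1) * ((m+1).choose (i'+1)) * ((2*(i'+1)+2*j).choose ((i'+1)+j)) = _
      rw [Nat.choose_succ_succ' m i']
      simp only [gP]
      push_cast
      ring
  rw [show m+1+1 = m+2 from rfl, sum_congr rfl split, sum_add_distrib]
  congr 1
  · rw [sum_range_succ]
    simp [Nat.choose_eq_zero_of_lt (show m < m+1 by omega)]
  · rw [sum_range_succ']
    simp only [gP]
    rw [mul_sum]
    simp only [add_zero]
    refine sum_congr rfl fun i hi => ?_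
    have e1 : 2*(i+1)+2*j = 2*i+2*(j+1) := by omega
    have e2 : i+1+j = i+(j+1) := by omega
    rw [e1, e2]
    ring

noncomputable def Tcl (m j : ℕ) : ℝ :=
  ((2*j).choose j : ℝ) * ((2*m).choose m : ℝ) / (4^m * ((m+j).choose j : ℝ))

lemma Tclosed : ∀ m j, TT m j = Tcl m j := by
  intro m
  induction m with
  | zero =>
    intro j
    unfold TT Tcl
    simp
  | succ m ih =>
    intro j
    rw [pascalT, ih j, ih (j+1)]
    unfold Tcl
    -- nat facts
    have f1 : ((m+1) * ((2*(m+1)).choose (m+1)) : ℕ) = 2*(2*m+1) * ((2*m).choose m) := by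
      have := Nat.succ_mul_centralBinom_succ m
      unfold Nat.centralBinom at this
      simpa [Nat.succ_eq_add_one] using this
    have f2 : ((j+1) * ((2*(j+1)).choose (j+1)) : ℕ) = 2*(2*j+1) * ((2*j).choose j) := by
      have := Nat.succ_mul_centralBinom_succ j
      unfold Nat.centralBinom at this
      simpa [Nat.succ_eq_add_one] using this
    have f4 : ((m+j+1) * ((m+j).choose j) : ℕ) = ((m+j+1).choose (j+1)) * (j+1) := by
      have := Nat.add_one_mul_choose_eq (m+j) j
      simpa [Nat.succ_eq_add_one] using this
    have f3 : ((m+1) * ((m+j+1).choose j) : ℕ) = (m+j+1) * ((m+j).choose j) := by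
      have h1 := Nat.choose_succ_right_eq (m+j+1) j
      have h2 : m+j+1 - j = m+1 := by omega
      rw [h2] at h1
      calc (m+1) * ((m+j+1).choose j) = (m+j+1).choose j * (m+1) := by ring
        _ = (m+j+1).choose (j+1) * (j+1) := h1.symm
        _ = (m+j+1) * ((m+j).choose j) := f4.symm
    -- cast and clear denominators
    have c1 : (((m+j).choose j : ℕ) : ℝ) ≠ 0 :=
      Nat.cast_ne_zero.mpr (Nat.choose_pos (by omega)).ne'
    have c2 : (((m+1+j).choose j : ℕ) : ℝ) ≠ 0 :=
      Nat.cast_ne_zero.mpr (Nat.choose_pos (by omega)).ne'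
    have c3 : (((m+(j+1)).choose (j+1) : ℕ) : ℝ) ≠ 0 :=
      Nat.cast_ne_zero.mpr (Nat.choose_pos (by omega)).ne'
    have r1 := congrArg (Nat.cast (R := ℝ)) f1
    have r2 := congrArg (Nat.cast (R := ℝ)) f2
    have r3 := congrArg (Nat.cast (R := ℝ)) f3
    have r4 := congrArg (Nat.cast (R := ℝ)) f4
    push_cast at r1 r2 r3 r4
    have e1 : m+1+j = m+j+1 := by omega
    have e2 : m+(j+1) = m+j+1 := by omega
    rw [e1, e2] at *
    have hm1 : ((m:ℝ)+1) ≠ 0 := by positivity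
    have hj1 : ((j:ℝ)+1) ≠ 0 := by positivity
    have hp : (4:ℝ)^m ≠ 0 := by positivity
    have v1 : ((2*(m+1)).choose (m+1) : ℝ) = 2*(2*(m:ℝ)+1) * ((2*m).choose m) / ((m:ℝ)+1) := by
      rw [eq_div_iff hm1]; linarith [r1]
    have v2 : ((2*(j+1)).choose (j+1) : ℝ) = 2*(2*(j:ℝ)+1) * ((2*j).choose j) / ((j:ℝ)+1) := by
      rw [eq_div_iff hj1]; linarith [r2]
    have v3 : ((m+j+1).choose j : ℝ) = ((m:ℝ)+(j:ℝ)+1) * ((m+j).choose j) / ((m:ℝ)+1) := by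
      rw [eq_div_iff hm1]; linarith [r3]
    have v4 : ((m+j+1).choose (j+1) : ℝ) = ((m:ℝ)+(j:ℝ)+1) * ((m+j).choose j) / ((j:ℝ)+1) := by
      rw [eq_div_iff hj1]; linarith [r4]
    rw [v1, v3, v4, v2]
    have hmj1 : ((m:ℝ)+(j:ℝ)+1) ≠ 0 := by positivity
    field_simp
    ring


lemma key (x : ℝ) : ∀ n : ℕ,
    (∑ k ∈ range (n+1), ((n.choose k : ℝ))^2 * (x^2)^k * ((1-x)^2)^(n-k))
    = ∑ j ∈ range (n+1), cb j * cb (n-j) * ((1-2*x)^2)^j := by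
  intro n
  induction n using Nat.twoStepInduction with
  | zero => norm_num [cb]
  | one =>
    simp only [sum_range_succ, sum_range_zero]
    norm_num [cb]
    ring
  | more n ih0 ih1 =>
    have hL := Lrec (x^2) ((1-x)^2) n
    have hR := Rrec ((1-2*x)^2) n
    refine mul_left_cancel₀ (show ((n:ℝ)+2) ≠ 0 by positivity) ?_
    rw [hL, ih0, ih1]
    linear_combination (-1/2 : ℝ) * hR

theorem stmt_5 (n : ℕ) (hn : 0 < n) (x : ℝ) :
    ∑ k ∈ Finset.range (n + 1), ((n.choose k : ℝ) * x ^ k * (1 - x) ^ (n - k)) ^ 2 =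
    ∑ j ∈ Finset.range (n + 1),
      (1 - 2 * x) ^ (2 * j) * (4 : ℝ) ^ (-(j : ℤ)) * (n.choose j) *
        ∑ i ∈ Finset.range (n - j + 1),
          (-1/4 : ℝ) ^ i * ((n - j).choose i) * ((2 * i + 2 * j).choose (i + j)) := by
  have hLHS : ∑ k ∈ Finset.range (n + 1), ((n.choose k : ℝ) * x ^ k * (1 - x) ^ (n - k)) ^ 2
      = ∑ k ∈ range (n+1), ((n.choose k : ℝ))^2 * (x^2)^k * ((1-x)^2)^(n-k) :=
    sum_congr rfl fun k _ => by
      rw [mul_pow, mul_pow, ← pow_mul, ← pow_mul, Nat.mul_comm k 2, Nat.mul_comm (n-k) 2,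
        pow_mul, pow_mul]
  have hRHS : ∑ j ∈ Finset.range (n + 1),
      (1 - 2 * x) ^ (2 * j) * (4 : ℝ) ^ (-(j : ℤ)) * (n.choose j) *
        (∑ i ∈ Finset.range (n - j + 1),
          (-1/4 : ℝ) ^ i * ((n - j).choose i) * ((2 * i + 2 * j).choose (i + j)))
      = ∑ j ∈ range (n+1), cb j * cb (n-j) * ((1-2*x)^2)^j := by
    refine sum_congr rfl fun j hj => ?_
    rw [mem_range] at hj
    have hinner : (∑ i ∈ Finset.range (n - j + 1),
        (-1/4 : ℝ) ^ i * ((n - j).choose i) * ((2 * i + 2 * j).choose (i + j)))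
        = TT (n-j) j := rfl
    rw [hinner, Tclosed]
    unfold Tcl cb
    have e1 : n - j + j = n := by omega
    rw [e1]
    have h4 : (4:ℝ) ^ (-(j:ℤ)) = ((4:ℝ)^j)⁻¹ := by
      rw [zpow_neg, zpow_natCast]
    rw [h4]
    have hcnj : ((n.choose j : ℕ) : ℝ) ≠ 0 :=
      Nat.cast_ne_zero.mpr (Nat.choose_pos (by omega)).ne'
    have hp1 : ((4:ℝ)^j) ≠ 0 := by positivity
    have hp2 : ((4:ℝ)^(n-j)) ≠ 0 := by positivity
    have hpow : (1 - 2*x)^(2*j) = ((1-2*x)^2)^j := by rw [pow_mul]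
    rw [hpow]
    field_simp
  rw [hLHS, hRHS]
  exact key x n
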